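/- arXiv:2503.07301 — 6 statements merged into one kernel-verified Lean document; each statement's English description precedes it below -/
import Mathlib

section
/- Let k have characteristic not 2 and let q be a quadratic form on a finite-dimensional space V with Gram matrix Q. Let V̄ = V/ker Q with induced nondegenerate quadratic form q̄. Then there is an algebra isomorphism Cl(V,q)/(ker Q) ≅ Cl(V̄, q̄), where (ker Q) denotes the two-sided ideal of Cl(V,q) generated by ker Q. -/
/-- Quotient mk as an algebra hom. -/
def RingCon.mkAlgHom {k A : Type*} [CommSemiring k] [Semiring A] [Algebra k A]
    (c : RingCon A) : A →ₐ[k] c.Quotient :=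
  { c.mk' with commutes' := fun _ => rfl }

/-- Lift an algebra hom along a ring congruence. -/
def RingCon.liftAlgHom {k A B : Type*} [CommSemiring k] [Semiring A] [Semiring B]
    [Algebra k A] [Algebra k B] (c : RingCon A) (f : A →ₐ[k] B)
    (H : ∀ a b, c a b → f a = f b) : c.Quotient →ₐ[k] B where
  toFun := fun x => Quotient.liftOn' x f H
  map_one' := map_one f
  map_mul' := Quotient.ind₂' fun a b => map_mul f a b
  map_zero' := map_zero f
  map_add' := Quotient.ind₂' fun a b => map_add f a b
  commutes' := fun r => f.commutes r

@[simp] lemma RingCon.liftAlgHom_mk {k A B : Type*} [CommSemiring k] [Semiring A] [Semiring B]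
    [Algebra k A] [Algebra k B] (c : RingCon A) (f : A →ₐ[k] B)
    (H : ∀ a b, c a b → f a = f b) (a : A) :
    c.liftAlgHom f H (c.mkAlgHom (k := k) a) = f a := rfl

/-- Let `k` have characteristic not 2 and let `q` be a quadratic form on a
finite-dimensional space `V` with Gram matrix `Q`.  Let `V̄ = V / ker Q` (realized as the
codomain of a surjective linear map `p` whose kernel is the radical `ker Q` of the polar
bilinear form of `q`) with the induced quadratic form `q̄` (so `q̄ (p v) = q v`).  Then there
is an algebra isomorphism `Cl(V,q) / (ker Q) ≅ Cl(V̄, q̄)`, where `(ker Q)` is the two-sided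
ideal of `Cl(V,q)` generated by (the image under `ι` of) `ker Q`. -/
theorem cliffordAlgebra_quotient_radical_iso
    {k V V' : Type*} [Field k] (hchar : (2 : k) ≠ 0)
    [AddCommGroup V] [Module k V] [FiniteDimensional k V]
    [AddCommGroup V'] [Module k V']
    (q : QuadraticForm k V) (q' : QuadraticForm k V')
    (p : V →ₗ[k] V') (hp : Function.Surjective p)
    (hker : ∀ x, x ∈ LinearMap.ker p ↔ ∀ y, QuadraticMap.polar q x y = 0)
    (hq' : ∀ v, q' (p v) = q v) :
    Nonempty
      ((TwoSidedIdeal.span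
          (CliffordAlgebra.ι q '' (LinearMap.ker p : Set V))).ringCon.Quotient
        ≃ₐ[k] CliffordAlgebra q') := by
  classical
  -- a linear section of `p`
  obtain ⟨s, hs⟩ := p.exists_rightInverse_of_surjective (LinearMap.range_eq_top.2 hp)
  have hps : ∀ v', p (s v') = v' := fun v' => congrArg (· v') hs
  -- isometries
  let pI : q →qᵢ q' := { toLinearMap := p, map_app' := hq' }
  have hsI : ∀ v', q (s v') = q' v' := fun v' => by rw [← hq' (s v'), hps]
  let sI : q' →qᵢ q := { toLinearMap := s, map_app' := hsI }
  set I := TwoSidedIdeal.span (CliffordAlgebra.ι q '' (LinearMap.ker p : Set V)) with hI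
  set c := I.ringCon with hc
  let f : CliffordAlgebra q →ₐ[k] CliffordAlgebra q' := CliffordAlgebra.map pI
  let g : CliffordAlgebra q' →ₐ[k] CliffordAlgebra q := CliffordAlgebra.map sI
  -- the ideal is contained in the kernel of `f`
  have hIker : I ≤ TwoSidedIdeal.ker f.toRingHom := by
    intro x hx
    refine TwoSidedIdeal.mem_span_iff.1 hx _ ?_
    rintro _ ⟨v, hv, rfl⟩
    rw [SetLike.mem_coe, TwoSidedIdeal.mem_ker]
    show f (CliffordAlgebra.ι q v) = 0
    have hv0 : p v = 0 := hv
    show CliffordAlgebra.map pI (CliffordAlgebra.ι q v) = 0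
    rw [CliffordAlgebra.map_apply_ι]
    show CliffordAlgebra.ι q' (p v) = 0
    rw [hv0, map_zero]
  have H : ∀ a b, c a b → f a = f b := by
    intro a b hab
    have hab' : a - b ∈ I := (I.rel_iff a b).1 hab
    have := (TwoSidedIdeal.mem_ker f.toRingHom).1 (hIker hab')
    have h2 : f a - f b = 0 := by rw [← map_sub]; exact this
    exact sub_eq_zero.1 h2
  let lift := c.liftAlgHom f H
  let mk : CliffordAlgebra q →ₐ[k] c.Quotient := c.mkAlgHom (k := k)
  have hmk : ∀ x y : CliffordAlgebra q, x - y ∈ I → mk x = mk y := by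
    intro x y hxy
    show (x : c.Quotient) = (y : c.Quotient)
    exact (RingCon.eq c).2 ((I.rel_iff x y).2 hxy)
  refine ⟨AlgEquiv.ofAlgHom lift (mk.comp g) ?_ ?_⟩
  · apply CliffordAlgebra.hom_ext
    apply LinearMap.ext
    intro v'
    show lift (mk (g (CliffordAlgebra.ι q' v'))) = CliffordAlgebra.ι q' v'
    simp only [g, f, CliffordAlgebra.map_apply_ι]
    show f (CliffordAlgebra.ι q (sI v')) = CliffordAlgebra.ι q' v'
    simp only [f, CliffordAlgebra.map_apply_ι]
    show CliffordAlgebra.ι q' (p (s v')) = CliffordAlgebra.ι q' v'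
    rw [hps]
  · have key : (mk.comp g).comp f = mk := by
      apply CliffordAlgebra.hom_ext
      apply LinearMap.ext
      intro v
      show mk (g (f (CliffordAlgebra.ι q v))) = mk (CliffordAlgebra.ι q v)
      simp only [f, g, CliffordAlgebra.map_apply_ι]
      show mk (CliffordAlgebra.ι q (s (p v))) = mk (CliffordAlgebra.ι q v)
      apply hmk
      rw [← map_sub]
      refine TwoSidedIdeal.subset_span ⟨s (p v) - v, ?_, rfl⟩
      show s (p v) - v ∈ LinearMap.ker p
      rw [LinearMap.mem_ker, map_sub, hps, sub_self]
    apply AlgHom.ext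
    intro x
    induction x using Quotient.inductionOn' with
    | h a =>
      show (mk.comp g) (lift (mk a)) = mk a
      have h1 : lift (mk a) = f a := rfl
      rw [h1]
      exact DFunLike.congr_fun key a
end

section
/- The 2^{n+1}-dimensional exterior algebra Λ(k^{n+1}) over a field k of characteristic not 2 admits no bialgebra structure. -/
set_option maxHeartbeats 1000000

open TensorProduct

section Aux

variable {k : Type*} [Field k]

open TrivSqZeroExt DualNumber

/-- The "fst" coordinate functional on dual numbers, as a linear map. -/
noncomputable def fstL (k : Type*) [Field k] : DualNumber k →ₗ[k] k :=
  (TrivSqZeroExt.fstHom k k k).toLinearMap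

/-- The "snd" coordinate functional on dual numbers, as a linear map. -/
noncomputable def sndL (k : Type*) [Field k] : DualNumber k →ₗ[k] k :=
  TrivSqZeroExt.sndHom k k

/-- Coordinate functionals on `D ⊗ D`. -/
noncomputable def coordA (k : Type*) [Field k] :
    (DualNumber k ⊗[k] DualNumber k) →ₗ[k] k :=
  (TensorProduct.lid k k).toLinearMap ∘ₗ TensorProduct.map (fstL k) (fstL k)

noncomputable def coordB (k : Type*) [Field k] :
    (DualNumber k ⊗[k] DualNumber k) →ₗ[k] k :=
  (TensorProduct.lid k k).toLinearMap ∘ₗ TensorProduct.map (sndL k) (fstL k)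

noncomputable def coordC (k : Type*) [Field k] :
    (DualNumber k ⊗[k] DualNumber k) →ₗ[k] k :=
  (TensorProduct.lid k k).toLinearMap ∘ₗ TensorProduct.map (fstL k) (sndL k)

noncomputable def coordD (k : Type*) [Field k] :
    (DualNumber k ⊗[k] DualNumber k) →ₗ[k] k :=
  (TensorProduct.lid k k).toLinearMap ∘ₗ TensorProduct.map (sndL k) (sndL k)

theorem coordD_mul (t s : DualNumber k ⊗[k] DualNumber k) :
    coordD k (t * s) = coordA k t * coordD k s + coordB k t * coordC k s +
      coordC k t * coordB k s + coordD k t * coordA k s := by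
  induction t using TensorProduct.induction_on with
  | zero => change coordD k (Algebra.TensorProduct.mul 0 s) = _; simp
  | add t₁ t₂ h₁ h₂ =>
    have e : coordD k ((t₁ + t₂) * s) = coordD k (t₁ * s) + coordD k (t₂ * s) := by
      change coordD k (Algebra.TensorProduct.mul (t₁ + t₂) s) =
        coordD k (Algebra.TensorProduct.mul t₁ s) + coordD k (Algebra.TensorProduct.mul t₂ s)
      rw [map_add, LinearMap.add_apply, map_add]
    rw [e]; simp only [add_mul, map_add, h₁, h₂]; ring
  | tmul a b =>
    induction s using TensorProduct.induction_on with
    | zero => change coordD k (Algebra.TensorProduct.mul (a ⊗ₜ[k] b) 0) = _; simp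
    | add s₁ s₂ h₁ h₂ =>
      have e : coordD k (a ⊗ₜ[k] b * (s₁ + s₂)) =
          coordD k (a ⊗ₜ[k] b * s₁) + coordD k (a ⊗ₜ[k] b * s₂) := by
        change coordD k (Algebra.TensorProduct.mul (a ⊗ₜ[k] b) (s₁ + s₂)) =
          coordD k (Algebra.TensorProduct.mul (a ⊗ₜ[k] b) s₁) +
            coordD k (Algebra.TensorProduct.mul (a ⊗ₜ[k] b) s₂)
        rw [map_add, map_add]
      rw [e]; simp only [mul_add, map_add, h₁, h₂]; ring
    | tmul c d =>
      simp only [coordA, coordB, coordC, coordD, fstL, sndL,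
        Algebra.TensorProduct.tmul_mul_tmul, LinearMap.coe_comp,
        Function.comp_apply, TensorProduct.map_tmul, LinearEquiv.coe_coe,
        TensorProduct.lid_tmul, AlgHom.toLinearMap_apply, fstHom_apply,
        sndHom_apply, TrivSqZeroExt.fst_mul, DualNumber.snd_mul, smul_eq_mul]
      ring

end Aux

/-- The `2 ^ (n+1)`-dimensional exterior algebra `Λ(k^{n+1})` over a field
`k` of characteristic not 2 admits no bialgebra structure: there are no algebra maps
`Δ : Λ → Λ ⊗ Λ` and `ε : Λ → k` making it a coassociative counital coalgebra. -/
theorem exteriorAlgebra_no_bialgebra {k : Type*} [Field k] (hchar : (2 : k) ≠ 0) (n : ℕ) :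
    ¬ ∃ (Δ : ExteriorAlgebra k (Fin (n + 1) → k) →ₐ[k]
          (ExteriorAlgebra k (Fin (n + 1) → k) ⊗[k] ExteriorAlgebra k (Fin (n + 1) → k)))
        (ε : ExteriorAlgebra k (Fin (n + 1) → k) →ₐ[k] k),
      (∀ a, TensorProduct.assoc k _ _ _
            (TensorProduct.map Δ.toLinearMap LinearMap.id (Δ a)) =
          TensorProduct.map LinearMap.id Δ.toLinearMap (Δ a)) ∧
      (∀ a, TensorProduct.lid k _
            (TensorProduct.map ε.toLinearMap LinearMap.id (Δ a)) = a) ∧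
      (∀ a, TensorProduct.rid k _
            (TensorProduct.map LinearMap.id ε.toLinearMap (Δ a)) = a) := by
  classical
  rintro ⟨Δ, ε, -, hl, hr⟩
  set V := (Fin (n + 1) → k) with hV
  -- the algebra map Λ → k[ε] sending ι v to (v 0) • ε
  let fL : V →ₗ[k] DualNumber k := (LinearMap.proj 0).smulRight DualNumber.eps
  have hfL : ∀ v : V, fL v * fL v = 0 := by
    intro v
    simp only [fL, LinearMap.smulRight_apply, LinearMap.proj_apply]
    rw [smul_mul_smul_comm, DualNumber.eps_mul_eps, smul_zero]
  let g : ExteriorAlgebra k V →ₐ[k] DualNumber k := ExteriorAlgebra.lift k ⟨fL, hfL⟩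
  have hg : ∀ v : V, g (ExteriorAlgebra.ι k v) = v 0 • DualNumber.eps := fun v =>
    ExteriorAlgebra.lift_ι_apply k _ hfL v
  -- uniqueness of the counit: ε = fst ∘ g
  have hε : ∀ a, ε a = TrivSqZeroExt.fst (g a) := by
    suffices h : ε = (TrivSqZeroExt.fstHom k k k).comp g by
      intro a; rw [h]; rfl
    apply ExteriorAlgebra.hom_ext
    apply LinearMap.ext
    intro v
    have h1 : ε (ExteriorAlgebra.ι k v) * ε (ExteriorAlgebra.ι k v) = 0 := by
      rw [← map_mul, ExteriorAlgebra.ι_sq_zero, map_zero]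
    have h2 : ε (ExteriorAlgebra.ι k v) = 0 := by
      exact mul_self_eq_zero.mp h1
    simp only [LinearMap.coe_comp, Function.comp_apply, AlgHom.toLinearMap_apply,
      AlgHom.coe_comp, h2, hg]
    simp [TrivSqZeroExt.fst_smul]
  set Λ := ExteriorAlgebra k V with hΛ
  let G : (Λ ⊗[k] Λ) →ₐ[k] (DualNumber k ⊗[k] DualNumber k) := Algebra.TensorProduct.map g g
  set x := ExteriorAlgebra.ι k (Pi.single (0 : Fin (n + 1)) (1 : k) : V) with hx
  have hgx : g x = DualNumber.eps := by
    rw [hx, hg]; simp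
  set u := G (Δ x) with hu
  have hu2 : u * u = 0 := by
    rw [hu, ← map_mul, ← map_mul, ExteriorAlgebra.ι_sq_zero, map_zero, map_zero]
  -- transfer of the counit identities
  have transferR : ∀ t : Λ ⊗[k] Λ,
      coordA k (G t) = TrivSqZeroExt.fst (g (TensorProduct.rid k Λ
          (TensorProduct.map LinearMap.id ε.toLinearMap t))) ∧
      coordB k (G t) = TrivSqZeroExt.snd (g (TensorProduct.rid k Λ
          (TensorProduct.map LinearMap.id ε.toLinearMap t))) := by
    intro t
    induction t using TensorProduct.induction_on with
    | zero => simp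
    | add t₁ t₂ h₁ h₂ =>
      constructor <;>
        simp only [map_add, TrivSqZeroExt.fst_add, TrivSqZeroExt.snd_add,
          h₁.1, h₁.2, h₂.1, h₂.2]
    | tmul a b =>
      constructor <;>
      · simp only [G, coordA, coordB, fstL, sndL, Algebra.TensorProduct.map_tmul,
          TensorProduct.map_tmul, LinearMap.coe_comp, Function.comp_apply,
          LinearEquiv.coe_coe, TensorProduct.lid_tmul, TensorProduct.rid_tmul,
          LinearMap.id_coe, id_eq, AlgHom.toLinearMap_apply, TrivSqZeroExt.fstHom_apply,
          TrivSqZeroExt.sndHom_apply, map_smul, hε b,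
          TrivSqZeroExt.fst_smul, TrivSqZeroExt.snd_smul, smul_eq_mul]
        ring
  have transferL : ∀ t : Λ ⊗[k] Λ,
      coordC k (G t) = TrivSqZeroExt.snd (g (TensorProduct.lid k Λ
          (TensorProduct.map ε.toLinearMap LinearMap.id t))) := by
    intro t
    induction t using TensorProduct.induction_on with
    | zero => simp
    | add t₁ t₂ h₁ h₂ => simp only [map_add, TrivSqZeroExt.snd_add, h₁, h₂]
    | tmul a b =>
      simp only [G, coordC, fstL, sndL, Algebra.TensorProduct.map_tmul,
        TensorProduct.map_tmul, LinearMap.coe_comp, Function.comp_apply,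
        LinearEquiv.coe_coe, TensorProduct.lid_tmul,
        LinearMap.id_coe, id_eq, AlgHom.toLinearMap_apply, TrivSqZeroExt.fstHom_apply,
        TrivSqZeroExt.sndHom_apply, map_smul, hε a,
        TrivSqZeroExt.fst_smul, TrivSqZeroExt.snd_smul, smul_eq_mul]
  have hAu : coordA k u = 0 := by
    rw [hu, (transferR (Δ x)).1, hr x, hgx]; exact DualNumber.fst_eps
  have hBu : coordB k u = 1 := by
    rw [hu, (transferR (Δ x)).2, hr x, hgx]; exact DualNumber.snd_eps
  have hCu : coordC k u = 1 := by
    rw [hu, transferL (Δ x), hl x, hgx]; exact DualNumber.snd_eps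
  have : (0 : k) = 2 := by
    have h := coordD_mul u u
    rw [hu2, map_zero, hAu, hBu, hCu] at h
    rw [h]; ring
  exact hchar this.symm
end

section
/- Let A = Cl(α, β_i, γ_i, λ_{ij}) be a 2^{n+1}-dimensional Clifford algebra over a field k of characteristic not 2. If A admits a bialgebra structure, then A is isomorphic as a k-algebra to E(n) = Cl(1,0,...,0), the algebra generated by g, x_1, ..., x_n with g^2 = 1, x_i^2 = 0, gx_i = −x_ig, x_ix_j = −x_jx_i. -/
open TensorProduct

/-- Auxiliary splitting equivalence: if `f v = 1` then `k × ker f ≃ V`. -/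
noncomputable def splitEquiv {k V : Type*} [Field k] [AddCommGroup V] [Module k V]
    (f : V →ₗ[k] k) (v : V) (hv : f v = 1) : (k × LinearMap.ker f) ≃ₗ[k] V :=
  LinearEquiv.ofLinear
    (LinearMap.coprod (LinearMap.toSpanSingleton k V v) (LinearMap.ker f).subtype)
    (LinearMap.prod f (LinearMap.codRestrict (LinearMap.ker f)
      (LinearMap.id - LinearMap.smulRight f v) (by
        intro c
        simp [LinearMap.mem_ker, hv, mul_comm])))
    (by
      apply LinearMap.ext; intro y
      show (LinearMap.toSpanSingleton k V v) (f y) + (y - f y • v) = y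
      simp [LinearMap.toSpanSingleton_apply])
    (by
      apply LinearMap.ext; rintro ⟨c, z⟩
      have hz : f (z : V) = 0 := z.2
      refine Prod.ext ?_ (Subtype.ext ?_)
      · show f (c • v + (z : V)) = c
        simp [hv, hz]
      · show (c • v + (z:V)) - f (c • v + (z:V)) • v = (z : V)
        simp [hv, hz])

theorem splitEquiv_apply {k V : Type*} [Field k] [AddCommGroup V] [Module k V]
    (f : V →ₗ[k] k) (v : V) (hv : f v = 1) (c : k) (z : LinearMap.ker f) :
    splitEquiv f v hv (c, z) = c • v + z := rfl

theorem f_splitEquiv {k V : Type*} [Field k] [AddCommGroup V] [Module k V]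
    (f : V →ₗ[k] k) (v : V) (hv : f v = 1) (p : k × LinearMap.ker f) :
    f (splitEquiv f v hv p) = p.1 := by
  obtain ⟨c, z⟩ := p
  have hz : f (z : V) = 0 := z.2
  rw [splitEquiv_apply]
  simp [hv, hz]

theorem splitEquiv_symm_fst {k V : Type*} [Field k] [AddCommGroup V] [Module k V]
    (f : V →ₗ[k] k) (v : V) (hv : f v = 1) (y : V) :
    ((splitEquiv f v hv).symm y).1 = f y := rfl

theorem lid_map_id_apply {k A : Type*} [Field k] [AddCommGroup A] [Module k A]
    (g : A →ₗ[k] k) (z : k ⊗[k] A) :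
    TensorProduct.lid k k (TensorProduct.map LinearMap.id g z)
      = g (TensorProduct.lid k A z) := by
  induction z using TensorProduct.induction_on with
  | zero => simp
  | tmul a b => simp [smul_eq_mul, mul_comm]
  | add x y hx hy => simp [map_add, hx, hy]

theorem lid_map_id_apply' {k A : Type*} [Field k] [AddCommGroup A] [Module k A]
    (g : A →ₗ[k] k) (z : A ⊗[k] k) :
    TensorProduct.lid k k (TensorProduct.map g LinearMap.id z)
      = g (TensorProduct.rid k A z) := by
  induction z using TensorProduct.induction_on with
  | zero => simp
  | tmul a b => simp [smul_eq_mul, mul_comm]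
  | add x y hx hy => simp [map_add, hx, hy]

theorem algTensorMap_toLinearMap {k A B C D : Type*} [CommSemiring k]
    [Semiring A] [Semiring B] [Semiring C] [Semiring D]
    [Algebra k A] [Algebra k B] [Algebra k C] [Algebra k D]
    (f : A →ₐ[k] B) (g : C →ₐ[k] D) :
    (Algebra.TensorProduct.map f g).toLinearMap
      = TensorProduct.map f.toLinearMap g.toLinearMap := by
  apply TensorProduct.ext'
  intro a c
  simp

theorem fstL_apply {k : Type*} [Field k] (d : DualNumber k) :
    (TrivSqZeroExt.fstHom k k k).toLinearMap d = TrivSqZeroExt.fst d := rfl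

theorem sndL_apply {k : Type*} [Field k] (d : DualNumber k) :
    (TrivSqZeroExt.sndHom k k) d = TrivSqZeroExt.snd d := rfl

theorem dualNumber_eq_smul {k : Type*} [Field k] (s : DualNumber k) :
    s = TrivSqZeroExt.fst s • (1 : DualNumber k)
      + TrivSqZeroExt.snd s • DualNumber.eps := by
  conv_lhs => rw [← TrivSqZeroExt.inl_fst_add_inr_snd_eq s]
  rw [DualNumber.inr_eq_smul_eps]
  congr 1
  rw [← TrivSqZeroExt.algebraMap_eq_inl (R' := k) (M := k)]
  exact Algebra.algebraMap_eq_smul_one _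

/-- The basis decomposition of an element of `k[ε] ⊗ k[ε]`. -/
theorem dualNumber_tensor_decomp {k : Type*} [Field k]
    (z : DualNumber k ⊗[k] DualNumber k) :
    z = (TensorProduct.lid k k)
          (TensorProduct.map (TrivSqZeroExt.fstHom k k k).toLinearMap
            (TrivSqZeroExt.fstHom k k k).toLinearMap z) • ((1:DualNumber k) ⊗ₜ[k] 1)
      + (TensorProduct.lid k k)
          (TensorProduct.map (TrivSqZeroExt.sndHom k k)
            (TrivSqZeroExt.fstHom k k k).toLinearMap z) • (DualNumber.eps ⊗ₜ[k] 1)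
      + (TensorProduct.lid k k)
          (TensorProduct.map (TrivSqZeroExt.fstHom k k k).toLinearMap
            (TrivSqZeroExt.sndHom k k) z) • ((1:DualNumber k) ⊗ₜ[k] DualNumber.eps)
      + (TensorProduct.lid k k)
          (TensorProduct.map (TrivSqZeroExt.sndHom k k)
            (TrivSqZeroExt.sndHom k k) z) • (DualNumber.eps ⊗ₜ[k] DualNumber.eps) := by
  induction z using TensorProduct.induction_on with
  | zero => simp
  | tmul s t =>
      conv_lhs => rw [dualNumber_eq_smul s, dualNumber_eq_smul t]
      simp only [TensorProduct.add_tmul, TensorProduct.tmul_add, TensorProduct.smul_tmul_smul,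
        TensorProduct.map_tmul, TensorProduct.lid_tmul, fstL_apply, sndL_apply, smul_eq_mul,
        TrivSqZeroExt.fst_one, TrivSqZeroExt.snd_one, DualNumber.fst_eps, DualNumber.snd_eps]
      module
  | add x y hx hy =>
      conv_lhs => rw [hx, hy]
      simp only [map_add, add_smul]
      abel

set_option maxHeartbeats 1000000

/-- Let `A = Cl(α, β_i, γ_i, λ_{ij})` be a `2 ^ (n+1)`-dimensional
Clifford(-type) algebra over a field `k` of characteristic not 2 (realized as the Clifford
algebra of an arbitrary quadratic form `q` on `k^{n+1}`).  If `A` admits a bialgebra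
structure (algebra maps `Δ, ε` making it a coassociative counital coalgebra), then `A` is
isomorphic as a `k`-algebra to `E(n) = Cl(1, 0, …, 0)`, the Clifford algebra of the diagonal
form with weights `(1, 0, …, 0)`. -/
theorem cliffordAlgebra_bialgebra_iso_En
    {k : Type*} [Field k] (hchar : (2 : k) ≠ 0) (n : ℕ)
    (q : QuadraticForm k (Fin (n + 1) → k))
    (hbi : ∃ (Δ : CliffordAlgebra q →ₐ[k] (CliffordAlgebra q ⊗[k] CliffordAlgebra q))
        (ε : CliffordAlgebra q →ₐ[k] k),
      (∀ a, TensorProduct.assoc k _ _ _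
            (TensorProduct.map Δ.toLinearMap LinearMap.id (Δ a)) =
          TensorProduct.map LinearMap.id Δ.toLinearMap (Δ a)) ∧
      (∀ a, TensorProduct.lid k _
            (TensorProduct.map ε.toLinearMap LinearMap.id (Δ a)) = a) ∧
      (∀ a, TensorProduct.rid k _
            (TensorProduct.map LinearMap.id ε.toLinearMap (Δ a)) = a)) :
    Nonempty (CliffordAlgebra q ≃ₐ[k]
      CliffordAlgebra (QuadraticMap.weightedSumSquares k
        (fun i : Fin (n + 1) => if i = 0 then (1 : k) else 0))) := by
  obtain ⟨Δ, ε, _hassoc, hl, hr⟩ := hbi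
  -- the linear functional f w = ε (ι w) satisfies f w ^ 2 = q w
  set f : (Fin (n + 1) → k) →ₗ[k] k := ε.toLinearMap ∘ₗ CliffordAlgebra.ι q with hf_def
  have hfw : ∀ w, f w = ε (CliffordAlgebra.ι q w) := fun w => rfl
  have hq : ∀ w : Fin (n + 1) → k, q w = f w * f w := by
    intro w
    have h := congrArg ε (CliffordAlgebra.ι_sq_scalar q w)
    simp only [map_mul, AlgHom.commutes, Algebra.algebraMap_self, RingHom.id_apply] at h
    rw [hfw, ← h]
  by_cases hex : ∃ w, f w ≠ 0
  · -- Case 1: f ≠ 0, so q is equivalent to the weighted form (1,0,…,0)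
    obtain ⟨v0, hv0⟩ := hex
    set v : Fin (n + 1) → k := (f v0)⁻¹ • v0 with hv_def
    have hv : f v = 1 := by
      simp [hv_def, inv_mul_cancel₀ hv0]
    set g : (Fin (n + 1) → k) →ₗ[k] k := LinearMap.proj 0 with hg_def
    set u : Fin (n + 1) → k := Pi.single 0 1 with hu_def
    have hu : g u = 1 := by
      rw [hg_def, hu_def]
      simp
    have hdimV : Module.finrank k (Fin (n + 1) → k) = n + 1 := by
      rw [Module.finrank_pi]
      simp
    have hdimf : Module.finrank k (LinearMap.ker f) = n := by
      have h1 := LinearMap.finrank_range_add_finrank_ker f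
      have h2 : LinearMap.range f = ⊤ := by
        rw [LinearMap.range_eq_top]
        intro c
        exact ⟨c • v, by simp [hv]⟩
      rw [h2, hdimV] at h1
      simp only [finrank_top, Module.finrank_self] at h1
      omega
    have hdimg : Module.finrank k (LinearMap.ker g) = n := by
      have h1 := LinearMap.finrank_range_add_finrank_ker g
      have h2 : LinearMap.range g = ⊤ := by
        rw [LinearMap.range_eq_top]
        intro c
        exact ⟨c • u, by simp [hu]⟩
      rw [h2, hdimV] at h1
      simp only [finrank_top, Module.finrank_self] at h1
      omega
    obtain ⟨ψ⟩ := FiniteDimensional.nonempty_linearEquiv_of_finrank_eq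
      (hdimg.trans hdimf.symm)
    set E : (Fin (n + 1) → k) ≃ₗ[k] (Fin (n + 1) → k) :=
      (splitEquiv g u hu).symm.trans
        (((LinearEquiv.refl k k).prodCongr ψ).trans (splitEquiv f v hv)) with hE_def
    have hE : ∀ x, f (E x) = x 0 := by
      intro x
      have h1 : E x = splitEquiv f v hv
          (((LinearEquiv.refl k k).prodCongr ψ) ((splitEquiv g u hu).symm x)) := rfl
      rw [h1, f_splitEquiv]
      show (((splitEquiv g u hu).symm x).1, ψ (((splitEquiv g u hu).symm x).2)).1 = x 0
      rw [splitEquiv_symm_fst]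
      rfl
    refine ⟨(CliffordAlgebra.equivOfIsometry
      (⟨E, fun m => ?_⟩ : QuadraticMap.IsometryEquiv
        (QuadraticMap.weightedSumSquares k
          (fun i : Fin (n + 1) => if i = 0 then (1 : k) else 0)) q)).symm⟩
    show q (E m) = _
    rw [hq (E m), hE m, QuadraticMap.weightedSumSquares_apply]
    rw [Finset.sum_eq_single 0]
    · simp
    · intro b _ hb
      simp [hb]
    · simp
  · -- Case 2: f = 0, so q = 0; derive a contradiction from the bialgebra axioms.
    exfalso
    push_neg at hex
    have hq0 : ∀ w, q w = 0 := fun w => by rw [hq w, hex w, mul_zero]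
    -- map to the dual numbers sending ι w to (w 0) • ε
    have hf' : ∀ m : Fin (n + 1) → k,
        (LinearMap.smulRight (LinearMap.proj 0 : (Fin (n + 1) → k) →ₗ[k] k)
          (DualNumber.eps : DualNumber k)) m
        * (LinearMap.smulRight (LinearMap.proj 0 : (Fin (n + 1) → k) →ₗ[k] k)
          (DualNumber.eps : DualNumber k)) m = algebraMap k (DualNumber k) (q m) := by
      intro m
      rw [hq0, map_zero]
      rw [LinearMap.smulRight_apply, smul_mul_smul_comm, DualNumber.eps_mul_eps, smul_zero]
    set φ : CliffordAlgebra q →ₐ[k] DualNumber k := CliffordAlgebra.lift q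
      ⟨LinearMap.smulRight (LinearMap.proj 0) DualNumber.eps, hf'⟩ with hφ_def
    have hφι : ∀ w, φ (CliffordAlgebra.ι q w) = (w 0) • DualNumber.eps := by
      intro w
      rw [hφ_def, CliffordAlgebra.lift_ι_apply]
      rfl
    set fstL : DualNumber k →ₗ[k] k := (TrivSqZeroExt.fstHom k k k).toLinearMap with hfstL
    set sndL : DualNumber k →ₗ[k] k := TrivSqZeroExt.sndHom k k with hsndL
    -- fst ∘ φ = ε
    have hεφ : (TrivSqZeroExt.fstHom k k k).comp φ = ε := by
      apply CliffordAlgebra.hom_ext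
      apply LinearMap.ext
      intro w
      show TrivSqZeroExt.fst (φ (CliffordAlgebra.ι q w)) = ε (CliffordAlgebra.ι q w)
      rw [hφι w, ← hfw w, hex w]
      simp
    set x : CliffordAlgebra q := CliffordAlgebra.ι q (Pi.single 0 1) with hx_def
    have hx2 : x * x = 0 := by
      rw [hx_def, CliffordAlgebra.ι_sq_scalar, hq0, map_zero]
    set u : DualNumber k ⊗[k] DualNumber k := (Algebra.TensorProduct.map φ φ) (Δ x)
      with hu_def
    have hu2 : u * u = 0 := by
      rw [hu_def, ← map_mul, ← map_mul, hx2, map_zero, map_zero]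
    have hsndφx : sndL (φ x) = 1 := by
      rw [hx_def, hφι]
      simp [hsndL]
    -- compute the components of u
    have hmapu : ∀ (p₁ p₂ : DualNumber k →ₗ[k] k),
        TensorProduct.map p₁ p₂ u
          = TensorProduct.map (p₁ ∘ₗ φ.toLinearMap) (p₂ ∘ₗ φ.toLinearMap) (Δ x) := by
      intro p₁ p₂
      rw [hu_def]
      rw [show (Algebra.TensorProduct.map φ φ) (Δ x)
        = (Algebra.TensorProduct.map φ φ).toLinearMap (Δ x) from rfl]
      rw [algTensorMap_toLinearMap, ← LinearMap.comp_apply, ← TensorProduct.map_comp]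
    have hfstφ : fstL ∘ₗ φ.toLinearMap = ε.toLinearMap := by
      rw [hfstL]
      exact congrArg AlgHom.toLinearMap hεφ
    have hc00 : TensorProduct.lid k k (TensorProduct.map fstL fstL u) = 0 := by
      rw [hmapu, hfstφ]
      have h4 : TensorProduct.map ε.toLinearMap ε.toLinearMap (Δ x)
          = TensorProduct.map LinearMap.id ε.toLinearMap
              (TensorProduct.map ε.toLinearMap LinearMap.id (Δ x)) := by
        rw [← LinearMap.comp_apply, ← TensorProduct.map_comp]
        simp
      rw [h4, lid_map_id_apply, hl x]
      show ε (CliffordAlgebra.ι q (Pi.single 0 1)) = 0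
      rw [← hfw, hex]
    have hc10 : TensorProduct.lid k k (TensorProduct.map fstL sndL u) = 1 := by
      rw [hmapu, hfstφ]
      have h4 : TensorProduct.map ε.toLinearMap (sndL ∘ₗ φ.toLinearMap) (Δ x)
          = TensorProduct.map LinearMap.id (sndL ∘ₗ φ.toLinearMap)
              (TensorProduct.map ε.toLinearMap LinearMap.id (Δ x)) := by
        rw [← LinearMap.comp_apply, ← TensorProduct.map_comp]
        simp
      rw [h4, lid_map_id_apply, hl x]
      exact hsndφx
    have hc01 : TensorProduct.lid k k (TensorProduct.map sndL fstL u) = 1 := by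
      rw [hmapu, hfstφ]
      have h4 : TensorProduct.map (sndL ∘ₗ φ.toLinearMap) ε.toLinearMap (Δ x)
          = TensorProduct.map (sndL ∘ₗ φ.toLinearMap) LinearMap.id
              (TensorProduct.map LinearMap.id ε.toLinearMap (Δ x)) := by
        rw [← LinearMap.comp_apply, ← TensorProduct.map_comp]
        simp
      rw [h4, lid_map_id_apply', hr x]
      exact hsndφx
    -- decompose u
    have hdecomp := dualNumber_tensor_decomp u
    rw [← hfstL, ← hsndL, hc00, hc10, hc01, zero_smul, one_smul, one_smul, zero_add]
      at hdecomp
    -- compute u * u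
    have hsq : (0 : DualNumber k ⊗[k] DualNumber k)
        = DualNumber.eps ⊗ₜ[k] DualNumber.eps + DualNumber.eps ⊗ₜ[k] DualNumber.eps := by
      rw [← hu2]
      conv_lhs => rw [hdecomp]
      have : LeftDistribClass (DualNumber k ⊗[k] DualNumber k) := Distrib.leftDistribClass (DualNumber k ⊗[k] DualNumber k)
      have : RightDistribClass (DualNumber k ⊗[k] DualNumber k) := Distrib.rightDistribClass (DualNumber k ⊗[k] DualNumber k)
      simp only [mul_add, add_mul, Algebra.TensorProduct.tmul_mul_tmul,
        smul_mul_smul_comm, mul_smul_comm, smul_mul_assoc,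
        DualNumber.eps_mul_eps, one_mul, mul_one]
      simp
    have h3 : TensorProduct.lid k k (TensorProduct.map sndL sndL
        ((DualNumber.eps : DualNumber k) ⊗ₜ[k] DualNumber.eps
          + DualNumber.eps ⊗ₜ[k] DualNumber.eps)) = (2 : k) := by
      simp [hsndL, two_smul]
      norm_num
    rw [← hsq] at h3
    simp at h3
    exact hchar h3.symm
end

section
/- Let A be an algebra over k (char ≠ 2), c ∈ A invertible with c² ∈ Z(A), and φ_c(a) = c⁻¹ac. Let d: A → A be a φ_c-derivation. Then d anticommutes with φ_c (i.e., dφ_c = −φ_c d) if and only if d is the inner φ_c-derivation d(a) = ua − φ_c(a)u with u = d(c)c⁻¹/2. -/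
/-- Let `A` be an algebra over `k` (char ≠ 2), `c ∈ A` invertible with
`c² ∈ Z(A)`, and `φ_c(a) = c⁻¹ a c`.  Let `d : A → A` be a `φ_c`-derivation.  Then `d`
anticommutes with `φ_c` (`d φ_c = −φ_c d`) if and only if `d` is the inner `φ_c`-derivation
`d(a) = u a − φ_c(a) u` with `u = d(c) c⁻¹ / 2`. -/
theorem skew_derivation_anticommutes_iff_inner
    {k A : Type*} [Field k] [Invertible (2 : k)] [Ring A] [Algebra k A]
    (c : Aˣ) (hc : ∀ a : A, ((c : A) * c) * a = a * ((c : A) * c))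
    (d : A →ₗ[k] A)
    (hd : ∀ a b : A, d (a * b) = d a * b + ((↑c⁻¹ : A) * a * c) * d b) :
    (∀ a : A, d ((↑c⁻¹ : A) * a * c) = -((↑c⁻¹ : A) * d a * c)) ↔
      ∀ a : A, d a = ((⅟(2 : k)) • (d c * (↑c⁻¹ : A))) * a
          - ((↑c⁻¹ : A) * a * c) * ((⅟(2 : k)) • (d c * (↑c⁻¹ : A))) := by
  have hinv : (↑c⁻¹ : A) * c = 1 := c.inv_mul
  have hinv' : (c : A) * ↑c⁻¹ = 1 := c.mul_inv
  have hsq : ∀ b : A, (↑c⁻¹ : A) * ↑c⁻¹ * b * c * c = b := by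
    intro b
    have h1 : (↑c⁻¹ : A) * ↑c⁻¹ * b * c * c = (↑c⁻¹ : A) * ↑c⁻¹ * (b * ((c : A) * c)) := by
      simp [mul_assoc]
    rw [h1, ← hc b]
    calc (↑c⁻¹ : A) * ↑c⁻¹ * ((c : A) * c * b)
        = (↑c⁻¹ : A) * ((↑c⁻¹ : A) * c) * c * b := by simp [mul_assoc]
      _ = b := by rw [hinv, mul_one, hinv, one_mul]
  constructor
  · intro H a
    have e1 : d (a * c) = d a * c + ((↑c⁻¹ : A) * a * c) * d c := hd a c
    have hac : (a : A) * c = (c : A) * ((↑c⁻¹ : A) * a * c) := by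
      rw [← mul_assoc, ← mul_assoc, hinv', one_mul]
    have e2 : d (a * c) = d c * ((↑c⁻¹ : A) * a * c) - d a * c := by
      rw [hac, hd c, H a, hinv, one_mul]
      rw [mul_neg, sub_eq_add_neg]
      congr 1
      congr 1
      calc (c : A) * ((↑c⁻¹ : A) * d a * c) = ((c : A) * ↑c⁻¹) * d a * c := by
            simp [mul_assoc]
        _ = d a * c := by rw [hinv', one_mul]
    have e3 : (2 : k) • (d a * c)
        = d c * ((↑c⁻¹ : A) * a * c) - ((↑c⁻¹ : A) * a * c) * d c := by
      have h := e1.symm.trans e2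
      rw [two_smul]
      rw [eq_sub_iff_add_eq] at h ⊢
      calc d a * c + d a * c + ((↑c⁻¹ : A) * a * c) * d c
          = d a * c + (d a * c + ((↑c⁻¹ : A) * a * c) * d c) := by abel
        _ = d a * c + d (a * c) := by rw [← e1]
        _ = d c * ((↑c⁻¹ : A) * a * c) := by rw [e2]; abel
    have e4 : d a * c = ⅟(2 : k) • (d c * ((↑c⁻¹ : A) * a * c) - ((↑c⁻¹ : A) * a * c) * d c) := by
      rw [← e3, invOf_smul_smul]
    calc d a = d a * c * ↑c⁻¹ := (Units.mul_inv_cancel_right _ _).symm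
      _ = (⅟(2 : k) • (d c * ((↑c⁻¹ : A) * a * c) - ((↑c⁻¹ : A) * a * c) * d c)) * ↑c⁻¹ := by
          rw [e4]
      _ = ((⅟(2 : k)) • (d c * (↑c⁻¹ : A))) * a
          - ((↑c⁻¹ : A) * a * c) * ((⅟(2 : k)) • (d c * (↑c⁻¹ : A))) := by
          rw [smul_mul_assoc, sub_mul, smul_sub, smul_mul_assoc, mul_smul_comm]
          congr 1
          · congr 1
            simp [mul_assoc]
          · congr 1
            simp [mul_assoc]
  · intro H a
    set u : A := ⅟(2 : k) • (d c * (↑c⁻¹ : A)) with hu_def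
    -- from H c derive anticommutation of d c with c
    have hdc : d c * c = -((c : A) * d c) := by
      have h := H c
      rw [hinv, one_mul] at h
      -- h : d c = u * ↑c - ↑c * u
      have h2 : (2 : k) • d c = d c - (c : A) * d c * ↑c⁻¹ := by
        calc (2 : k) • d c = (2 : k) • (u * ↑c - ↑c * u) := by rw [← h]
          _ = (2 : k) • (u * ↑c) - (2 : k) • ((c : A) * u) := by rw [smul_sub]
          _ = d c - (c : A) * d c * ↑c⁻¹ := by
              rw [hu_def, smul_mul_assoc, mul_smul_comm, smul_invOf_smul, smul_invOf_smul,
                Units.inv_mul_cancel_right, ← mul_assoc]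
      rw [two_smul] at h2
      have h3 : d c = -((c : A) * d c * ↑c⁻¹) := by
        have h4 : d c + d c - d c = d c - (c : A) * d c * ↑c⁻¹ - d c := by rw [h2]
        calc d c = d c + d c - d c := by abel
          _ = d c - (c : A) * d c * ↑c⁻¹ - d c := h4
          _ = -((c : A) * d c * ↑c⁻¹) := by abel
      calc d c * c = -((c : A) * d c * ↑c⁻¹) * c := by rw [← h3]
        _ = -((c : A) * d c) := by rw [neg_mul, Units.inv_mul_cancel_right]
    have huc : u * c = -((c : A) * u) := by
      rw [hu_def, smul_mul_assoc, mul_smul_comm, ← smul_neg]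
      congr 1
      rw [Units.inv_mul_cancel_right]
      calc d c = d c * c * ↑c⁻¹ := (Units.mul_inv_cancel_right _ _).symm
        _ = -((c : A) * d c * ↑c⁻¹) := by rw [hdc, neg_mul]
        _ = -((c : A) * (d c * ↑c⁻¹)) := by rw [mul_assoc]
    have hcu : (↑c⁻¹ : A) * u = -(u * ↑c⁻¹) := by
      calc (↑c⁻¹ : A) * u = (↑c⁻¹ : A) * (u * c) * ↑c⁻¹ := by
            rw [mul_assoc, Units.mul_inv_cancel_right]
        _ = (↑c⁻¹ : A) * (-((c : A) * u)) * ↑c⁻¹ := by rw [huc]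
        _ = -(((↑c⁻¹ : A) * c) * u * ↑c⁻¹) := by rw [mul_neg]; simp [mul_assoc]
        _ = -(u * ↑c⁻¹) := by rw [hinv, one_mul]
    have hX : ∀ x : A, x * u * c = -(x * c * u) := by
      intro x
      rw [mul_assoc, huc, mul_neg, ← mul_assoc]
    rw [H ((↑c⁻¹ : A) * a * c), H a]
    simp only [mul_sub, sub_mul, ← mul_assoc, ← hu_def]
    rw [hsq a, hcu, hX ((↑c⁻¹ : A) * ↑c⁻¹ * a * c), hsq a]
    simp only [neg_mul]
    abel
end

section
/- Let A be a central simple algebra over k (char ≠ 2), c ∈ A invertible with c² ∈ k, and for u ∈ A with uc + cu = 0 define d(a) = ua − c⁻¹ac·u. Then d² = 0 if and only if u² ∈ k. -/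
/-- Let `A` be a central simple algebra over `k` (char ≠ 2), `c ∈ A`
invertible with `c² ∈ k`, and for `u ∈ A` with `uc + cu = 0` define
`d(a) = u a − c⁻¹ a c · u`.  Then `d² = 0` if and only if `u² ∈ k`. -/
theorem inner_skew_derivation_sq_zero_iff
    {k A : Type*} [Field k] (hchar : (2 : k) ≠ 0) [Ring A] [Algebra k A]
    [IsSimpleRing A]
    (hcentral : ∀ z : A, (∀ a : A, z * a = a * z) → ∃ r : k, z = algebraMap k A r)
    (c : Aˣ) (hc : ∃ r : k, (c : A) * c = algebraMap k A r)
    (u : A) (hu : u * c + c * u = 0)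
    (d : A → A) (hd : ∀ a : A, d a = u * a - ((↑c⁻¹ : A) * a * c) * u) :
    (∀ a : A, d (d a) = 0) ↔ ∃ r : k, u * u = algebraMap k A r := by
  obtain ⟨r, hr⟩ := hc
  have huc : u * (c : A) = -((c : A) * u) := eq_neg_of_add_eq_zero_left hu
  have hcu : (c : A) * u = -(u * (c : A)) := eq_neg_of_add_eq_zero_right hu
  have hinvu : u * (↑c⁻¹ : A) = -((↑c⁻¹ : A) * u) := by
    calc u * (↑c⁻¹ : A) = ((↑c⁻¹ : A) * (c : A)) * (u * (↑c⁻¹ : A)) := by simp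
      _ = (↑c⁻¹ : A) * (((c : A) * u) * (↑c⁻¹ : A)) := by simp only [mul_assoc]
      _ = (↑c⁻¹ : A) * ((-(u * (c : A))) * (↑c⁻¹ : A)) := by rw [hcu]
      _ = -((↑c⁻¹ : A) * (u * ((c : A) * (↑c⁻¹ : A)))) := by
          simp only [neg_mul, mul_neg, mul_assoc]
      _ = -((↑c⁻¹ : A) * u) := by simp
  have h2 : ∀ x : A, u * ((↑c⁻¹ : A) * x) = -((↑c⁻¹ : A) * (u * x)) := by
    intro x
    rw [← mul_assoc, hinvu]
    simp [mul_assoc]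
  have h3 : ∀ x : A, u * ((c : A) * x) = -((c : A) * (u * x)) := by
    intro x
    rw [← mul_assoc, huc]
    simp [mul_assoc]
  have hcc : ∀ x y : A, x * ((c:A) * ((c:A) * y)) = (c:A) * ((c:A) * (x * y)) := by
    intro x y
    calc x * ((c:A)*((c:A)*y)) = x * (((c:A)*(c:A))*y) := by rw [mul_assoc]
      _ = x * (algebraMap k A r * y) := by rw [hr]
      _ = algebraMap k A r * (x*y) := by
          rw [← mul_assoc, ← Algebra.commutes, mul_assoc]
      _ = ((c:A)*(c:A))*(x*y) := by rw [hr]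
      _ = (c:A)*((c:A)*(x*y)) := by rw [mul_assoc]
  have hinvc : ∀ x : A, (↑c⁻¹ : A) * ((c : A) * x) = x := by
    intro x; rw [← mul_assoc]; simp
  have key : ∀ a : A, d (d a) = u * u * a - a * (u * u) := by
    intro a
    rw [hd, hd]
    simp only [mul_sub, sub_mul, mul_assoc]
    rw [h2 (a * ((c:A) * u)), h3 u]
    simp only [mul_neg]
    rw [hcc a (u * u), hinvc, hinvc]
    abel
  constructor
  · intro h
    apply hcentral
    intro a
    exact sub_eq_zero.mp ((key a).symm.trans (h a))
  · intro ⟨s, hs⟩ a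
    rw [key, hs, Algebra.commutes, sub_self]
end

section
/- Let A be an algebra over k (char ≠ 2) with an invertible central element z of odd degree generating the center over k in the sense Z(A) = k ⊕ kz, let σ be an algebra involution of A with σ(z) = −z, and let c be invertible with cσ(c) ∈ Z(A). Then any (σ∘φ_c)-derivation d of A satisfies d(a) = ua − σ(c⁻¹ac)u for all a ∈ A, where u = d(z)z⁻¹/2; in particular every (σ∘φ_c)-derivation is inner. -/
/-- Let `A` be an algebra over `k` (char ≠ 2) with an invertible central
element `z` of odd degree generating the center over `k` in the sense `Z(A) = k ⊕ kz`, let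
`σ` be an algebra involution of `A` with `σ(z) = −z`, and let `c` be invertible with
`cσ(c) ∈ Z(A)`.  Then any `(σ∘φ_c)`-derivation `d` of `A` satisfies
`d(a) = u a − σ(c⁻¹ a c) u` for all `a ∈ A`, where `u = d(z) z⁻¹ / 2`; in particular every
`(σ∘φ_c)`-derivation is inner. -/
theorem sigma_phi_derivation_is_inner
    {k A : Type*} [Field k] [Invertible (2 : k)] [Ring A] [Algebra k A]
    (z : Aˣ) (hzc : ∀ a : A, (z : A) * a = a * (z : A))
    (hcenter : ∀ w : A, (∀ a : A, w * a = a * w) →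
      ∃ r s : k, w = algebraMap k A r + s • (z : A))
    (σ : A →ₐ[k] A) (hσ2 : ∀ a, σ (σ a) = a) (hσz : σ (z : A) = -(z : A))
    (c : Aˣ) (hc : ∀ a : A, ((c : A) * σ (c : A)) * a = a * ((c : A) * σ (c : A)))
    (d : A →ₗ[k] A)
    (hd : ∀ a b : A, d (a * b) = d a * b + σ ((↑c⁻¹ : A) * a * c) * d b) :
    ∀ a : A, d a = ((⅟(2 : k)) • (d (z : A) * (↑z⁻¹ : A))) * a
        - σ ((↑c⁻¹ : A) * a * c) * ((⅟(2 : k)) • (d (z : A) * (↑z⁻¹ : A))) := by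

  intro a
  have hzinv : ∀ b : A, (↑z⁻¹ : A) * b = b * (↑z⁻¹ : A) :=
    fun b => Commute.units_inv_left (hzc b)
  have hψz : σ ((↑c⁻¹ : A) * (z : A) * c) = -(z : A) := by
    rw [mul_assoc, hzc, ← mul_assoc, Units.inv_mul, one_mul, hσz]
  have key : d (a * z) = d ((z : A) * a) := by rw [hzc]
  rw [hd a z, hd z a, hψz] at key
  have hz : (z : A) * d a = d a * z := hzc (d a)
  rw [neg_mul, hz] at key
  have e1 : d a * z + d a * z = d z * a - σ ((↑c⁻¹ : A) * a * c) * d z := by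
    linear_combination (norm := abel) key
  have e2 : d a = (⅟(2 : k)) • ((d z * a - σ ((↑c⁻¹ : A) * a * c) * d z) * ↑z⁻¹) := by
    rw [← e1]
    rw [← two_smul k (d a * (z : A)), smul_mul_assoc, smul_smul, invOf_mul_self, one_smul,
      mul_assoc, Units.mul_inv, mul_one]
  rw [e2, sub_mul, mul_assoc (σ _), smul_sub, mul_assoc, ← hzinv a, ← mul_assoc,
    smul_mul_assoc, mul_smul_comm]
end
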